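/- arXiv:1508.03593 — 3 statements merged into one kernel-verified Lean document; each statement's English description precedes it below -/
import Mathlib

section
/- For every sequence of workers σ, the number of tasks assigned by the Offline Approximation algorithm OA satisfies OPT(σ) ≤ 4 · ALG_OA(σ), where OPT(σ) is the maximum size of a budget-feasible assignment for σ. -/
/-- `P` is a valid assignment of workers (indexed by `Fin n`) to tasks
(indexed by `Fin m`): every assigned task is feasible for its worker, and
each worker and each task appears at most once. -/
def IsAssignment {n m : ℕ} (J : Fin n → Finset (Fin m)) (P : Finset (Fin n × Fin m)) : Prop :=
  (∀ p ∈ P, p.2 ∈ J p.1) ∧ ∀ p ∈ P, ∀ q ∈ P, p ≠ q → p.1 ≠ q.1 ∧ p.2 ≠ q.2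

open scoped Classical in
/-- `OPTval J b B`: the maximum size of a budget-feasible assignment. -/
noncomputable def OPTval {n m : ℕ} (J : Fin n → Finset (Fin m)) (b : Fin n → Fin m → ℝ)
    (B : ℝ) : ℕ :=
  ((Finset.univ : Finset (Finset (Fin n × Fin m))).filter
    fun P => IsAssignment J P ∧ ∑ p ∈ P, b p.1 p.2 ≤ B).sup Finset.card

open scoped Classical in
/-- The Fixed Threshold Policy `FTP` with threshold `p`, run on the list of workers `L`,
set of still-available tasks `T` and remaining budget `f`.  On each worker `i` it
computes `C_i`, the set of available feasible tasks with bid at most `min p f`; if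
`C_i` is nonempty it assigns the task `choice C_i` to worker `i` and pays her bid.
It returns the number of assigned tasks. -/
noncomputable def ftpRun {n m : ℕ} (J : Fin n → Finset (Fin m)) (b : Fin n → Fin m → ℝ)
    (choice : Finset (Fin m) → Fin m) (p : ℝ) :
    List (Fin n) → Finset (Fin m) → ℝ → ℕ
  | [], _, _ => 0
  | i :: rest, T, f =>
    let C := T.filter fun j => j ∈ J i ∧ b i j ≤ min p f
    if C.Nonempty then
      ftpRun J b choice p rest (T.erase (choice C)) (f - b i (choice C)) + 1
    else
      ftpRun J b choice p rest T f

open scoped Classical in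
/-- The Offline Approximation algorithm `OA`: run `FTP` (on the worker list `L`, with all
tasks available and budget `B`) with threshold equal to each bid value `b i j` (for
`i ∈ L` and `j ∈ J i`) and return the maximum number of assignments obtained. -/
noncomputable def oaRun {n m : ℕ} (J : Fin n → Finset (Fin m)) (b : Fin n → Fin m → ℝ)
    (choice : Finset (Fin m) → Fin m) (L : List (Fin n)) (B : ℝ) : ℕ :=
  (L.toFinset.biUnion fun i => (J i).image fun j => b i j).sup
    fun t => ftpRun J b choice t L Finset.univ B

open scoped Classical in
lemma ftp_key {n m : ℕ} (J : Fin n → Finset (Fin m)) (b : Fin n → Fin m → ℝ)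
    (choice : Finset (Fin m) → Fin m)
    (hchoice : ∀ s : Finset (Fin m), s.Nonempty → choice s ∈ s)
    (t : ℝ) (ht : 0 < t)
    (P : Finset (Fin n × Fin m))
    (hP : ∀ p ∈ P, ∀ q ∈ P, p ≠ q → p.1 ≠ q.1 ∧ p.2 ≠ q.2)
    (hJ : ∀ p ∈ P, p.2 ∈ J p.1)
    (hble : ∀ p ∈ P, b p.1 p.2 ≤ t) :
    ∀ (L : List (Fin n)), L.Nodup → ∀ (T : Finset (Fin m)) (f : ℝ),
      (P.filter fun p => p.1 ∈ L ∧ p.2 ∈ T).card ≤ 2 * ftpRun J b choice t L T f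
      ∨ f - t < t * (ftpRun J b choice t L T f : ℝ) := by
  intro L
  induction L with
  | nil =>
    intro _ T f
    left
    rw [ftpRun]
    simp
  | cons i rest ih =>
    intro hnd T f
    rw [ftpRun]
    by_cases hne : (T.filter fun j => j ∈ J i ∧ b i j ≤ min t f).Nonempty
    · simp only [hne, if_true]
      set C := T.filter fun j => j ∈ J i ∧ b i j ≤ min t f with hCdef
      set j0 := choice C with hj0
      have hj0C : j0 ∈ C := hchoice C hne
      have hj0T : j0 ∈ T := (Finset.mem_filter.mp hj0C).1
      have hbj0 : b i j0 ≤ min t f := (Finset.mem_filter.mp hj0C).2.2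
      rcases ih hnd.of_cons (T.erase j0) (f - b i j0) with h | h
      · left
        set S := P.filter fun p => p.1 ∈ (i :: rest) ∧ p.2 ∈ T with hS
        set S' := P.filter fun p => p.1 ∈ rest ∧ p.2 ∈ T.erase j0 with hS'
        have hsub : S' ⊆ S := by
          intro p hp
          rw [hS', Finset.mem_filter] at hp
          rw [hS, Finset.mem_filter]
          exact ⟨hp.1, List.mem_cons_of_mem _ hp.2.1, Finset.mem_of_mem_erase hp.2.2⟩
        have hdiff : S \ S' ⊆ (P.filter fun p => p.1 = i) ∪ (P.filter fun p => p.2 = j0) := by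
          intro p hp
          rw [Finset.mem_sdiff, hS, hS', Finset.mem_filter, Finset.mem_filter] at hp
          obtain ⟨⟨hpP, hpl, hpT⟩, hns⟩ := hp
          rw [Finset.mem_union, Finset.mem_filter, Finset.mem_filter]
          rcases List.mem_cons.mp hpl with h1 | h1
          · exact Or.inl ⟨hpP, h1⟩
          · right
            refine ⟨hpP, ?_⟩
            by_contra hne2
            exact hns ⟨hpP, h1, Finset.mem_erase.mpr ⟨hne2, hpT⟩⟩
        have h1 : (P.filter fun p => p.1 = i).card ≤ 1 := by
          rw [Finset.card_le_one]
          intro a ha c hc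
          rw [Finset.mem_filter] at ha hc
          by_contra hac
          exact (hP a ha.1 c hc.1 hac).1 (ha.2.trans hc.2.symm)
        have h2 : (P.filter fun p => p.2 = j0).card ≤ 1 := by
          rw [Finset.card_le_one]
          intro a ha c hc
          rw [Finset.mem_filter] at ha hc
          by_contra hac
          exact (hP a ha.1 c hc.1 hac).2 (ha.2.trans hc.2.symm)
        have hcard : S.card ≤ S'.card + 2 := by
          have := Finset.card_sdiff_add_card_eq_card hsub
          have h3 := (Finset.card_le_card hdiff).trans (Finset.card_union_le _ _)
          omega
        omega
      · right
        have hbt : b i j0 ≤ t := hbj0.trans (min_le_left _ _)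
        push_cast
        nlinarith [h]
    · simp only [hne, if_false]
      by_cases hex : ∃ p ∈ P, p.1 = i ∧ p.2 ∈ T
      · right
        obtain ⟨⟨pi, pj⟩, hpP, hp1, hp2⟩ := hex
        simp only at hp1 hp2
        subst hp1
        have hjJ : pj ∈ J pi := hJ _ hpP
        have hnle : ¬ (b pi pj ≤ min t f) := by
          intro hle
          exact hne ⟨pj, Finset.mem_filter.mpr ⟨hp2, hjJ, hle⟩⟩
        have hbt : b pi pj ≤ t := hble _ hpP
        have hft : f < t := by
          rcases (min_lt_iff.mp (lt_of_not_ge hnle |>.trans_le hbt)) with h | h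
          · exact absurd h (lt_irrefl t)
          · exact h
        have hpos : (0:ℝ) ≤ t * (ftpRun J b choice t rest T f : ℝ) := by positivity
        linarith
      · have heq : (P.filter fun p => p.1 ∈ (i :: rest) ∧ p.2 ∈ T)
            = P.filter fun p => p.1 ∈ rest ∧ p.2 ∈ T := by
          apply Finset.filter_congr
          intro p hp
          simp only [List.mem_cons, eq_iff_iff]
          constructor
          · rintro ⟨h1 | h1, h2⟩
            · exact absurd ⟨p, hp, h1, h2⟩ hex
            · exact ⟨h1, h2⟩
          · rintro ⟨h1, h2⟩
            exact ⟨Or.inr h1, h2⟩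
        rw [heq]
        exact ih hnd.of_cons T f

/-- For every sequence of workers (feasible sets `J`, positive bids `b`)
and budget `B > 0`, and every fixed tie-breaking rule `choice`, the number of tasks
assigned by the Offline Approximation algorithm `OA` satisfies
`OPT ≤ 4 * ALG_OA`. -/
theorem offline_approximation {n m : ℕ} (J : Fin n → Finset (Fin m))
    (b : Fin n → Fin m → ℝ) (B : ℝ) (hB : 0 < B)
    (hb : ∀ i, ∀ j ∈ J i, 0 < b i j)
    (choice : Finset (Fin m) → Fin m)
    (hchoice : ∀ s : Finset (Fin m), s.Nonempty → choice s ∈ s) :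
    OPTval J b B ≤ 4 * oaRun J b choice (List.finRange n) B := by
  classical
  unfold OPTval
  set F := ((Finset.univ : Finset (Finset (Fin n × Fin m))).filter
    fun P => IsAssignment J P ∧ ∑ p ∈ P, b p.1 p.2 ≤ B) with hF
  have hFne : F.Nonempty := by
    refine ⟨∅, Finset.mem_filter.mpr ⟨Finset.mem_univ _, ⟨?_, ?_⟩, ?_⟩⟩
    · intro p hp; exact absurd hp (Finset.notMem_empty p)
    · intro p hp; exact absurd hp (Finset.notMem_empty p)
    · simp [le_of_lt hB]
  obtain ⟨P, hPF, hPsup⟩ := Finset.exists_mem_eq_sup F hFne Finset.card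
  rw [hPsup]
  obtain ⟨hass, hsum⟩ := (Finset.mem_filter.mp hPF).2
  obtain ⟨hJP, hdist⟩ := hass
  set k := P.card with hk
  rcases Nat.eq_zero_or_pos k with hk0 | hk0
  · rw [hk0]; exact Nat.zero_le _
  -- bids of P are positive
  have hbpos : ∀ p ∈ P, 0 < b p.1 p.2 := fun p hp => hb p.1 p.2 (hJP p hp)
  have hPne : P.Nonempty := Finset.card_pos.mp hk0
  set r := (k + 1) / 2 with hr
  have hrk : r ≤ k := by omega
  have hr1 : 1 ≤ r := by omega
  -- the set of candidate thresholds
  set V := P.image (fun p => b p.1 p.2) with hV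
  set W := V.filter (fun t => r ≤ (P.filter fun p => b p.1 p.2 ≤ t).card) with hW
  have hWne : W.Nonempty := by
    have hVne : V.Nonempty := hPne.image _
    refine ⟨V.max' hVne, Finset.mem_filter.mpr ⟨V.max'_mem hVne, ?_⟩⟩
    have : P.filter (fun p => b p.1 p.2 ≤ V.max' hVne) = P := by
      apply Finset.filter_true_of_mem
      intro p hp
      exact V.le_max' _ (Finset.mem_image_of_mem _ hp)
    rw [this]; omega
  set t := W.min' hWne with htdef
  have htW : t ∈ W := W.min'_mem hWne
  have htV : t ∈ V := (Finset.mem_filter.mp htW).1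
  have htcount : r ≤ (P.filter fun p => b p.1 p.2 ≤ t).card := (Finset.mem_filter.mp htW).2
  obtain ⟨p0, hp0P, hp0t⟩ := Finset.mem_image.mp htV
  have htpos : 0 < t := hp0t ▸ hbpos p0 hp0P
  -- count of pairs with bid < t is at most r - 1
  have hlow : (P.filter fun p => b p.1 p.2 < t).card < r := by
    by_contra hcon
    push_neg at hcon
    set U := P.filter fun p => b p.1 p.2 < t with hU
    have hUne : U.Nonempty := Finset.card_pos.mp (lt_of_lt_of_le hr1 hcon)
    set V' := U.image (fun p => b p.1 p.2) with hV'
    have hV'ne : V'.Nonempty := hUne.image _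
    set t' := V'.max' hV'ne with ht'
    obtain ⟨q0, hq0U, hq0t⟩ := Finset.mem_image.mp (V'.max'_mem hV'ne)
    have hq0P : q0 ∈ P := (Finset.mem_filter.mp hq0U).1
    have ht'lt : t' < t := by
      rw [ht', ← hq0t]; exact (Finset.mem_filter.mp hq0U).2
    have ht'W : t' ∈ W := by
      have ht'V : t' ∈ V := by
        rw [ht', ← hq0t]; exact Finset.mem_image_of_mem _ hq0P
      refine Finset.mem_filter.mpr ⟨ht'V, ?_⟩
      refine le_trans hcon (Finset.card_le_card ?_)
      intro p hp
      have hpim := V'.le_max' _ (Finset.mem_image_of_mem (fun p => b p.1 p.2) hp)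
      rw [hU, Finset.mem_filter] at hp
      exact Finset.mem_filter.mpr ⟨hp.1, hpim⟩
    exact absurd (W.min'_le _ ht'W) (not_le.mpr ht'lt)
  have hhigh : k - r + 1 ≤ (P.filter fun p => t ≤ b p.1 p.2).card := by
    have hpart := Finset.card_filter_add_card_filter_not
      (s := P) (p := fun p => b p.1 p.2 < t)
    simp only [not_lt] at hpart
    omega
  -- budget bound: t * (k - r + 1) ≤ B
  have hbudget : t * ((k : ℝ) - r + 1) ≤ B := by
    have h1 : ((P.filter fun p => t ≤ b p.1 p.2).card : ℝ) * t
        ≤ ∑ p ∈ P.filter (fun p => t ≤ b p.1 p.2), b p.1 p.2 := by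
      have := Finset.card_nsmul_le_sum (P.filter fun p => t ≤ b p.1 p.2)
        (fun p => b p.1 p.2) t (fun p hp => (Finset.mem_filter.mp hp).2)
      simpa [nsmul_eq_mul] using this
    have h2 : ∑ p ∈ P.filter (fun p => t ≤ b p.1 p.2), b p.1 p.2 ≤ ∑ p ∈ P, b p.1 p.2 :=
      Finset.sum_le_sum_of_subset_of_nonneg (Finset.filter_subset _ _)
        (fun p hp _ => le_of_lt (hbpos p hp))
    have h3 : ((k : ℝ) - r + 1) * t ≤ ((P.filter fun p => t ≤ b p.1 p.2).card : ℝ) * t := by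
      apply mul_le_mul_of_nonneg_right _ (le_of_lt htpos)
      have : ((k - r + 1 : ℕ) : ℝ) ≤ ((P.filter fun p => t ≤ b p.1 p.2).card : ℝ) := by
        exact_mod_cast hhigh
      push_cast at this
      rw [Nat.cast_sub hrk] at this
      linarith
    linarith [mul_comm t ((k:ℝ) - r + 1)]
  -- t is a valid threshold for oaRun
  set R := ftpRun J b choice t (List.finRange n) Finset.univ B with hR
  have hRle : R ≤ oaRun J b choice (List.finRange n) B := by
    have hmem : t ∈ (List.finRange n).toFinset.biUnion (fun i => (J i).image fun j => b i j) := by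
      apply Finset.mem_biUnion.mpr
      refine ⟨p0.1, ?_, ?_⟩
      · simp [List.mem_toFinset, List.mem_finRange]
      · exact Finset.mem_image.mpr ⟨p0.2, hJP p0 hp0P, hp0t⟩
    unfold oaRun
    exact Finset.le_sup (f := fun s => ftpRun J b choice s (List.finRange n) Finset.univ B) hmem
  -- apply the key lemma to P' = pairs with bid ≤ t
  set P' := P.filter fun p => b p.1 p.2 ≤ t with hP'
  have hkey := ftp_key J b choice hchoice t htpos P'
    (fun p hp q hq hpq => hdist p (Finset.mem_of_mem_filter _ hp)
      q (Finset.mem_of_mem_filter _ hq) hpq)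
    (fun p hp => hJP p (Finset.mem_of_mem_filter _ hp))
    (fun p hp => (Finset.mem_filter.mp hp).2)
    (List.finRange n) (List.nodup_finRange n) Finset.univ B
  have hfull : (P'.filter fun p => p.1 ∈ List.finRange n ∧ p.2 ∈ (Finset.univ : Finset (Fin m))) = P' := by
    apply Finset.filter_true_of_mem
    intro p hp
    exact ⟨List.mem_finRange _, Finset.mem_univ _⟩
  rw [hfull] at hkey
  rcases hkey with h | h
  · -- matching case: r ≤ |P'| ≤ 2R
    have : r ≤ 2 * R := le_trans htcount h
    omega
  · -- budget case: B - t < t * R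
    have hkr : ((k - r : ℕ) : ℝ) < (R : ℝ) := by
      have h4 : t * ((k:ℝ) - r) ≤ B - t := by nlinarith
      have h5 : t * ((k:ℝ) - r) < t * R := lt_of_le_of_lt h4 h
      have h6 : ((k:ℝ) - r) < R := lt_of_mul_lt_mul_left h5 (le_of_lt htpos)
      rw [Nat.cast_sub hrk]
      exact h6
    have : k - r < R := by exact_mod_cast hkr
    omega
end

section
/- Let η ∈ (0,1) and k ≥ 1 be an integer, and define p_u = η/((k+1)η + 1) for 0 ≤ u ≤ k−1 and p_k = (1+η)/((k+1)η + 1). Then for every 0 ≤ v ≤ k, Σ_{u=v}^{k} p_u·(1−η)^{u−v} ≤ (1+η)/((k+1)η + 1). -/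
open Finset

/-! Writing `S v = ∑_{u=v}^{k} p u (1-η)^(u-v)`, one has `S k = p k` and
`S v = p v + (1-η) S (v+1)`, so the bound `B = (1+η)/((k+1)η+1)` propagates downwards from
`v = k` as soon as `p u + (1-η) B ≤ B` for `u < k`; after clearing the denominator this reads
`η + (1-η)(1+η) ≤ 1+η`, i.e. `0 ≤ η²`. -/

section TailSum

variable {R : Type*} [CommSemiring R]

theorem sum_Icc_mul_pow_sub_eq_add {v k : ℕ} (hvk : v < k) (f : ℕ → R) (r : R) :
    ∑ u ∈ Icc v k, f u * r ^ (u - v) = f v + r * ∑ u ∈ Icc (v + 1) k, f u * r ^ (u - (v + 1)) := by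
  rw [Icc_eq_cons_Ioc hvk.le, sum_cons, Nat.sub_self, pow_zero, mul_one, ← Icc_add_one_left_eq_Ioc,
    mul_sum]
  refine congrArg _ (sum_congr rfl fun u hu => ?_)
  rw [show u - v = u - (v + 1) + 1 by grind, pow_succ]
  ring

variable [PartialOrder R] [IsOrderedRing R]

theorem sum_Icc_mul_pow_sub_le {k : ℕ} {f : ℕ → R} {r B : R} (hr : 0 ≤ r) (hfk : f k ≤ B)
    (hf : ∀ u < k, f u + r * B ≤ B) {v : ℕ} (hv : v ≤ k) :
    ∑ u ∈ Icc v k, f u * r ^ (u - v) ≤ B := by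
  induction hv using Nat.decreasingInduction with
  | self => simpa using hfk
  | of_succ v hvk ih =>
    rw [sum_Icc_mul_pow_sub_eq_add hvk]
    exact (add_le_add_right (mul_le_mul_of_nonneg_left ih hr) _).trans (hf v hvk)

end TailSum

theorem hard_distribution_tail_sum_general (η : ℝ) (hη0 : 0 < η) (hη1 : η < 1)
    (k : ℕ) (p : ℕ → ℝ)
    (hpu : ∀ u, u < k → p u = η / (((k : ℝ) + 1) * η + 1))
    (hpk : p k = (1 + η) / (((k : ℝ) + 1) * η + 1)) :
    ∀ v, v ≤ k →
      ∑ u ∈ Finset.Icc v k, p u * (1 - η) ^ (u - v) ≤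
        (1 + η) / (((k : ℝ) + 1) * η + 1) := by
  intro v hv
  have hD : (0 : ℝ) < ((k : ℝ) + 1) * η + 1 := by positivity
  refine sum_Icc_mul_pow_sub_le (by linarith) hpk.le (fun u hu => ?_) hv
  rw [hpu u hu, ← mul_div_assoc, ← add_div, div_le_div_iff_of_pos_right hD]
  nlinarith

/-- Let `η ∈ (0,1)`, `k ≥ 1`, and let `p u = η/((k+1)η + 1)` for
`u < k` and `p k = (1+η)/((k+1)η + 1)`.  Then for every `v ≤ k`,
`Σ_{u=v}^{k} p u · (1-η)^(u-v) ≤ (1+η)/((k+1)η + 1)`. -/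
theorem hard_distribution_tail_sum (η : ℝ) (hη0 : 0 < η) (hη1 : η < 1)
    (k : ℕ) (hk : 1 ≤ k) (p : ℕ → ℝ)
    (hpu : ∀ u, u < k → p u = η / (((k : ℝ) + 1) * η + 1))
    (hpk : p k = (1 + η) / (((k : ℝ) + 1) * η + 1)) :
    ∀ v, v ≤ k →
      ∑ u ∈ Finset.Icc v k, p u * (1 - η) ^ (u - v) ≤
        (1 + η) / (((k : ℝ) + 1) * η + 1) :=
  hard_distribution_tail_sum_general η hη0 hη1 k p hpu hpk
end

section
/- Let η ∈ (0,1) and k ≥ 1 be an integer, define p_u = η/((k+1)η + 1) for 0 ≤ u ≤ k−1 and p_k = (1+η)/((k+1)η + 1), and let f_0, …, f_k be nonnegative reals with Σ_{v=0}^{k} f_v ≤ 1. Then Σ_{u=0}^{k} p_u · Σ_{v=0}^{u} f_v·(1−η)^{u−v} ≤ (1+η)/((k+1)η + 1). -/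
/-!
Exchanging the two sums writes the left-hand side as `∑ v, f v * c v`, where
`c v = ∑_{u=v}^{k} p u (1-η)^(u-v)` is the total weight that budget spent at level `v` earns.
The geometric sum `η ∑_{j<m} (1-η)^j = 1 - (1-η)^m` evaluates
`c v = (1 + η (1-η)^(k-v)) / ((k+1)η + 1) ≤ (1+η) / ((k+1)η + 1)`,
and since the `f v` are nonnegative with total at most `1`, the sum is at most this bound.
-/

open Finset

theorem sum_range_mul_sum_range_succ_comm {R : Type*} [CommSemiring R] (k : ℕ)
    (p f g : ℕ → R) :
    ∑ u ∈ range (k + 1), p u * ∑ v ∈ range (u + 1), f v * g (u - v) =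
      ∑ v ∈ range (k + 1), f v * ∑ u ∈ Ico v (k + 1), p u * g (u - v) := by
  simp only [mul_sum, ← Nat.Ico_zero_eq_range]
  rw [sum_Ico_Ico_comm]
  exact sum_congr rfl fun u _ => sum_congr rfl fun v _ => mul_left_comm _ _ _

theorem sum_Ico_mul_pow_sub_of_eq_const {R : Type*} [CommSemiring R] {k v : ℕ} (hv : v ≤ k)
    {p : ℕ → R} {a : R} (hp : ∀ u < k, p u = a) (x : R) :
    ∑ u ∈ Ico v (k + 1), p u * x ^ (u - v) =
      a * ∑ j ∈ range (k - v), x ^ j + p k * x ^ (k - v) := by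
  rw [sum_Ico_succ_top hv, sum_Ico_eq_sum_range, mul_sum]
  congr 1
  refine sum_congr rfl fun j hj => ?_
  rw [hp _ (by have := mem_range.mp hj; omega), Nat.add_sub_cancel_left]

theorem sum_mul_le_of_sum_le_one {ι : Type*} {s : Finset ι} {f c : ι → ℝ} {C : ℝ}
    (hf0 : ∀ i ∈ s, 0 ≤ f i) (hf1 : ∑ i ∈ s, f i ≤ 1) (hc : ∀ i ∈ s, c i ≤ C) (hC : 0 ≤ C) :
    ∑ i ∈ s, f i * c i ≤ C :=
  calc ∑ i ∈ s, f i * c i ≤ ∑ i ∈ s, f i * C :=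
        sum_le_sum fun i hi => mul_le_mul_of_nonneg_left (hc i hi) (hf0 i hi)
    _ = (∑ i ∈ s, f i) * C := (sum_mul _ _ _).symm
    _ ≤ C := mul_le_of_le_one_left hC hf1

theorem sum_Ico_mul_one_sub_pow_le {η : ℝ} (hη0 : 0 < η) (hη1 : η < 1) {k v : ℕ} (hv : v ≤ k)
    {p : ℕ → ℝ} (hpu : ∀ u, u < k → p u = η / (((k : ℝ) + 1) * η + 1))
    (hpk : p k = (1 + η) / (((k : ℝ) + 1) * η + 1)) :
    ∑ u ∈ Ico v (k + 1), p u * (1 - η) ^ (u - v) ≤ (1 + η) / (((k : ℝ) + 1) * η + 1) := by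
  set D : ℝ := ((k : ℝ) + 1) * η + 1
  have hgeom : η * ∑ j ∈ range (k - v), (1 - η) ^ j = 1 - (1 - η) ^ (k - v) := by
    simpa using mul_neg_geom_sum (1 - η) (k - v)
  have hpow : (1 - η) ^ (k - v) ≤ 1 := pow_le_one₀ (by linarith) (by linarith)
  calc ∑ u ∈ Ico v (k + 1), p u * (1 - η) ^ (u - v)
      = (η * ∑ j ∈ range (k - v), (1 - η) ^ j + (1 + η) * (1 - η) ^ (k - v)) / D := by
        rw [sum_Ico_mul_pow_sub_of_eq_const hv hpu, hpk]
        ring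
    _ = (1 + η * (1 - η) ^ (k - v)) / D := by rw [hgeom]; ring
    _ ≤ (1 + η) / D := by gcongr; nlinarith

theorem expected_inverse_competitive_ratio_general (η : ℝ) (hη0 : 0 < η) (hη1 : η < 1)
    (k : ℕ) (p : ℕ → ℝ)
    (hpu : ∀ u, u < k → p u = η / (((k : ℝ) + 1) * η + 1))
    (hpk : p k = (1 + η) / (((k : ℝ) + 1) * η + 1))
    (f : ℕ → ℝ) (hf0 : ∀ v, v ≤ k → 0 ≤ f v)
    (hf1 : ∑ v ∈ Finset.range (k + 1), f v ≤ 1) :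
    ∑ u ∈ Finset.range (k + 1), p u * ∑ v ∈ Finset.range (u + 1), f v * (1 - η) ^ (u - v) ≤
      (1 + η) / (((k : ℝ) + 1) * η + 1) := by
  rw [sum_range_mul_sum_range_succ_comm]
  refine sum_mul_le_of_sum_le_one (fun v hv => hf0 v ?_) hf1
    (fun v hv => sum_Ico_mul_one_sub_pow_le hη0 hη1 ?_ hpu hpk) (by positivity)
  all_goals exact Nat.lt_succ_iff.mp (mem_range.mp hv)

/-- Let `η ∈ (0,1)`, `k ≥ 1`, let `p u = η/((k+1)η + 1)` for `u < k`
and `p k = (1+η)/((k+1)η + 1)`, and let `f 0, …, f k` be nonnegative reals summing to at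
most `1`.  Then `Σ_{u=0}^{k} p u · Σ_{v=0}^{u} f v · (1-η)^(u-v) ≤ (1+η)/((k+1)η + 1)`. -/
theorem expected_inverse_competitive_ratio (η : ℝ) (hη0 : 0 < η) (hη1 : η < 1)
    (k : ℕ) (hk : 1 ≤ k) (p : ℕ → ℝ)
    (hpu : ∀ u, u < k → p u = η / (((k : ℝ) + 1) * η + 1))
    (hpk : p k = (1 + η) / (((k : ℝ) + 1) * η + 1))
    (f : ℕ → ℝ) (hf0 : ∀ v, v ≤ k → 0 ≤ f v)
    (hf1 : ∑ v ∈ Finset.range (k + 1), f v ≤ 1) :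
    ∑ u ∈ Finset.range (k + 1), p u * ∑ v ∈ Finset.range (u + 1), f v * (1 - η) ^ (u - v) ≤
      (1 + η) / (((k : ℝ) + 1) * η + 1) :=
  expected_inverse_competitive_ratio_general η hη0 hη1 k p hpu hpk f hf0 hf1
end
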